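/- Let R be the subalgebra of (A, w^A)² generated by the set {(x,y) : x, y ∈ X, x ≠ y}. Then R is disjoint from the diagonal: there is no r ∈ A with (r,r) ∈ R. -/
import Mathlib


/-- Formal terms built from variables in `V` and a single ternary operation symbol `w`. -/
inductive Term3 (V : Type) : Type
  | var : V → Term3 V
  | w : Term3 V → Term3 V → Term3 V → Term3 V
deriving DecidableEq

/-- Evaluation of a term in an algebra `(B, f)` under a variable assignment `σ`. -/
def Term3.eval {V B : Type} (f : B → B → B → B) (σ : V → B) : Term3 V → B
  | .var v => σ v
  | .w a b c => f (a.eval f σ) (b.eval f σ) (c.eval f σ)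

/-- Renaming/substitution of variables in a term. -/
def Term3.rename {V V' : Type} (ρ : V → V') : Term3 V → Term3 V'
  | .var v => .var (ρ v)
  | .w a b c => .w (a.rename ρ) (b.rename ρ) (c.rename ρ)

/-- A ternary operation `f` satisfies the 3-wnu identities:
`f(x,x,x) = x` and `f(x,x,y) = f(x,y,x) = f(y,x,x)`. -/
def Is3WNU {B : Type} (f : B → B → B → B) : Prop :=
  (∀ x, f x x x = x) ∧ ∀ x y, f x x y = f x y x ∧ f x y x = f y x x

/-- Two terms are equal modulo the equational theory generated by the 3-wnu identities,
i.e. they evaluate equally in every algebra satisfying the 3-wnu identities. -/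
def EqWnu3 {V : Type} (t s : Term3 V) : Prop :=
  ∀ (B : Type) (f : B → B → B → B) (σ : V → B), Is3WNU f → t.eval f σ = s.eval f σ

/-- The set `A` of 3-wnu normal forms (over the countably infinite variable set `ℕ`):
every variable is a normal form, and `w(a₁,a₂,a₃)` is a normal form whenever
`a₁,a₂,a₃` are normal forms with `a₁ ≠ a₂` and `a₁ ≠ a₃`. -/
inductive IsNF3 : Term3 ℕ → Prop
  | var (n : ℕ) : IsNF3 (.var n)
  | w (a b c : Term3 ℕ) : IsNF3 a → IsNF3 b → IsNF3 c → a ≠ b → a ≠ c →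
      IsNF3 (.w a b c)

/-- The normal-form operation `w^A`:
`w^A(a,a,a) = a`; `w^A(a,a,b) = w^A(a,b,a) = w^A(b,a,a) = w(b,a,a)` for `a ≠ b`;
and `w^A(a₁,a₂,a₃) = w(a₁,a₂,a₃)` for pairwise distinct `a₁,a₂,a₃`. -/
def wA3 (a b c : Term3 ℕ) : Term3 ℕ :=
  if a = b then (if b = c then a else .w c a a)
  else if a = c then .w b a a
  else if b = c then .w a b b
  else .w a b c

/-- The subterm relation `⪯` on normal forms: the reflexive transitive closure of
`{(a,b) : a,b ∈ A, ∃ c d e ∈ A, b = w(c,d,e) ∧ a ∈ {c,d,e}}`. -/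
def Sub3 (a b : Term3 ℕ) : Prop :=
  Relation.ReflTransGen
    (fun s t => IsNF3 s ∧ IsNF3 t ∧ ∃ c d e : Term3 ℕ,
      IsNF3 c ∧ IsNF3 d ∧ IsNF3 e ∧ t = .w c d e ∧ (s = c ∨ s = d ∨ s = e)) a b

/-- The subalgebra `R` of `(A, w^A)²` generated by the pairs of distinct variables:
the smallest set of pairs containing `{(x,y) : x ≠ y}` and closed under the
coordinatewise operation. -/
inductive InR3 : Term3 ℕ → Term3 ℕ → Prop
  | gen (x y : ℕ) : x ≠ y → InR3 (.var x) (.var y)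
  | close (a₁ b₁ a₂ b₂ a₃ b₃ : Term3 ℕ) :
      InR3 a₁ b₁ → InR3 a₂ b₂ → InR3 a₃ b₃ →
      InR3 (wA3 a₁ a₂ a₃) (wA3 b₁ b₂ b₃)

lemma nf_w_inv {c d e : Term3 ℕ} (h : IsNF3 (.w c d e)) :
    IsNF3 c ∧ IsNF3 d ∧ IsNF3 e := by
  cases h with | w _ _ _ hc hd he _ _ => exact ⟨hc, hd, he⟩

lemma wA3_eq (a b c : Term3 ℕ) :
    (a = b ∧ b = c ∧ wA3 a b c = a) ∨
    (a = b ∧ b ≠ c ∧ wA3 a b c = .w c a a) ∨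
    (a ≠ b ∧ a = c ∧ wA3 a b c = .w b a a) ∨
    (a ≠ b ∧ a ≠ c ∧ b = c ∧ wA3 a b c = .w a b b) ∨
    (a ≠ b ∧ a ≠ c ∧ b ≠ c ∧ wA3 a b c = .w a b c) := by
  unfold wA3; split_ifs <;> tauto

lemma wA3_nf {a b c : Term3 ℕ} (ha : IsNF3 a) (hb : IsNF3 b) (hc : IsNF3 c) :
    IsNF3 (wA3 a b c) := by
  rcases wA3_eq a b c with ⟨h1, h2, h⟩ | ⟨h1, h2, h⟩ | ⟨h1, h2, h⟩ |
    ⟨h1, h2, h3, h⟩ | ⟨h1, h2, h3, h⟩ <;> rw [h]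
  · exact ha
  · subst h1; exact .w _ _ _ hc ha ha (Ne.symm h2) (Ne.symm h2)
  · subst h2; exact .w _ _ _ hb ha ha (Ne.symm h1) (Ne.symm h1)
  · exact .w _ _ _ ha hb hb h1 h1
  · exact .w _ _ _ ha hb hc h1 h2

lemma sub_step {s c d e : Term3 ℕ} (hc : IsNF3 c) (hd : IsNF3 d) (he : IsNF3 e)
    (hs : s = c ∨ s = d ∨ s = e) (hnf : IsNF3 (.w c d e)) :
    Sub3 s (.w c d e) := by
  have hsnf : IsNF3 s := by rcases hs with h | h | h <;> subst h <;> assumption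
  exact Relation.ReflTransGen.single ⟨hsnf, hnf, c, d, e, hc, hd, he, rfl, hs⟩

lemma sub_cases {s t : Term3 ℕ} (h : Sub3 s t) :
    s = t ∨ ∃ c d e, t = .w c d e ∧ (Sub3 s c ∨ Sub3 s d ∨ Sub3 s e) := by
  rcases Relation.ReflTransGen.cases_tail h with h | ⟨m, hm, hstep⟩
  · exact Or.inl h.symm
  · obtain ⟨_, _, c, d, e, _, _, _, rfl, hmc⟩ := hstep
    refine Or.inr ⟨c, d, e, rfl, ?_⟩
    rcases hmc with rfl | rfl | rfl
    exacts [Or.inl hm, Or.inr (Or.inl hm), Or.inr (Or.inr hm)]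

lemma sub_args {a b c : Term3 ℕ} (ha : IsNF3 a) (hb : IsNF3 b) (hc : IsNF3 c) :
    Sub3 a (wA3 a b c) ∧ Sub3 b (wA3 a b c) ∧ Sub3 c (wA3 a b c) := by
  have hnf := wA3_nf ha hb hc
  rcases wA3_eq a b c with ⟨h1, h2, h⟩ | ⟨h1, h2, h⟩ | ⟨h1, h2, h⟩ |
    ⟨h1, h2, h3, h⟩ | ⟨h1, h2, h3, h⟩ <;> rw [h] at hnf ⊢
  · subst h1; subst h2; exact ⟨.refl, .refl, .refl⟩
  · subst h1
    exact ⟨sub_step hc ha ha (by tauto) hnf, sub_step hc ha ha (by tauto) hnf,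
      sub_step hc ha ha (by tauto) hnf⟩
  · subst h2
    exact ⟨sub_step hb ha ha (by tauto) hnf, sub_step hb ha ha (by tauto) hnf,
      sub_step hb ha ha (by tauto) hnf⟩
  · subst h3
    exact ⟨sub_step ha hb hb (by tauto) hnf, sub_step ha hb hb (by tauto) hnf,
      sub_step ha hb hb (by tauto) hnf⟩
  · exact ⟨sub_step ha hb hc (by tauto) hnf, sub_step ha hb hc (by tauto) hnf,
      sub_step ha hb hc (by tauto) hnf⟩

lemma key {a₁ a₂ a₃ b₁ b₂ b₃ : Term3 ℕ}
    (na1 : IsNF3 a₁) (na2 : IsNF3 a₂) (na3 : IsNF3 a₃)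
    (nb1 : IsNF3 b₁) (nb2 : IsNF3 b₂) (nb3 : IsNF3 b₃)
    (h11 : ¬Sub3 a₁ b₁) (h22 : ¬Sub3 a₂ b₂) (h33 : ¬Sub3 a₃ b₃)
    (h11' : ¬Sub3 b₁ a₁) :
    ¬Sub3 (wA3 a₁ a₂ a₃) (wA3 b₁ b₂ b₃) := by
  intro h
  obtain ⟨sa1, sa2, sa3⟩ := sub_args na1 na2 na3
  obtain ⟨sb1, sb2, sb3⟩ := sub_args nb1 nb2 nb3
  have nv := wA3_nf nb1 nb2 nb3
  rcases sub_cases h with heq | ⟨c, d, e, hv, hsub⟩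
  · -- u = v
    rcases wA3_eq a₁ a₂ a₃ with ⟨e1, e2, ua⟩ | ha
    · -- u = a₁
      rw [heq] at ua
      exact h11' (ua ▸ sb1)
    · rcases wA3_eq b₁ b₂ b₃ with ⟨f1, f2, ub⟩ | hb
      · rw [← heq] at ub
        exact h11 (ub ▸ sa1)
      · -- both are w-forms
        have k1 : a₁ ≠ b₁ := fun hh => h11 (hh ▸ Relation.ReflTransGen.refl)
        have k2 : a₂ ≠ b₂ := fun hh => h22 (hh ▸ Relation.ReflTransGen.refl)
        have k3 : a₃ ≠ b₃ := fun hh => h33 (hh ▸ Relation.ReflTransGen.refl)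
        rcases ha with ⟨g1, g2, ua⟩ | ⟨g1, g2, ua⟩ | ⟨g1, g2, g3, ua⟩ | ⟨g1, g2, g3, ua⟩ <;>
        rcases hb with ⟨f1, f2, ub⟩ | ⟨f1, f2, ub⟩ | ⟨f1, f2, f3, ub⟩ | ⟨f1, f2, f3, ub⟩ <;>
        rw [ua, ub] at heq <;> injection heq with i1 i2 i3 <;> simp_all
  · -- Sub3 u x with x a component of v
    have hxv : ∀ x, (x = c ∨ x = d ∨ x = e) → Sub3 x (wA3 b₁ b₂ b₃) := by
      intro x hx
      rw [hv] at nv ⊢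
      obtain ⟨nc, nd, ne⟩ := nf_w_inv nv
      exact sub_step nc nd ne hx nv
    rcases wA3_eq b₁ b₂ b₃ with ⟨f1, f2, ub⟩ | ⟨f1, f2, ub⟩ | ⟨f1, f2, ub⟩ |
      ⟨f1, f2, f3, ub⟩ | ⟨f1, f2, f3, ub⟩
    · -- v = b₁ : chain a₁ ⪯ u ⪯ x ⪯ v = b₁
      rcases hsub with hs | hs | hs
      · exact h11 (ub ▸ ((sa1.trans hs).trans (hxv c (Or.inl rfl))))
      · exact h11 (ub ▸ ((sa1.trans hs).trans (hxv d (Or.inr (Or.inl rfl)))))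
      · exact h11 (ub ▸ ((sa1.trans hs).trans (hxv e (Or.inr (Or.inr rfl)))))
    all_goals {
      rw [ub] at hv
      injection hv with j1 j2 j3
      subst j1; subst j2; subst j3
      try subst f1
      try subst f2
      try subst f3
      rcases hsub with hs | hs | hs <;>
        first
        | exact h11 (sa1.trans hs)
        | exact h22 (sa2.trans hs)
        | exact h33 (sa3.trans hs)
    }

lemma main {a b : Term3 ℕ} (h : InR3 a b) :
    IsNF3 a ∧ IsNF3 b ∧ ¬Sub3 a b ∧ ¬Sub3 b a := by
  induction h with
  | gen x y hxy =>
    refine ⟨.var x, .var y, ?_, ?_⟩ <;> intro hs <;>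
      rcases sub_cases hs with heq | ⟨c, d, e, ht, _⟩ <;> simp_all
  | close a₁ b₁ a₂ b₂ a₃ b₃ h1 h2 h3 ih1 ih2 ih3 =>
    obtain ⟨na1, nb1, s1, s1'⟩ := ih1
    obtain ⟨na2, nb2, s2, s2'⟩ := ih2
    obtain ⟨na3, nb3, s3, s3'⟩ := ih3
    exact ⟨wA3_nf na1 na2 na3, wA3_nf nb1 nb2 nb3,
      key na1 na2 na3 nb1 nb2 nb3 s1 s2 s3 s1',
      key nb1 nb2 nb3 na1 na2 na3 s1' s2' s3' s1⟩

/-- `R` is disjoint from the diagonal: there is no `r ∈ A` with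
`(r,r) ∈ R`. -/
theorem statement12 : ¬ ∃ r : Term3 ℕ, InR3 r r := by
  rintro ⟨r, hr⟩
  exact (main hr).2.2.1 Relation.ReflTransGen.refl
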